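/- Delivering the mean plan at every fraction is at least as good as any time-varying plan for the CVaR robust model: with a nonempty finite scenario set Ω, probability weights p : Ω → ℝ, p_ω ≥ 0, ∑_{ω∈Ω} p_ω = 1, matrices A(ω) ∈ ℝ^{N×M}, vectors x_0, d ∈ ℝ^N, a symmetric positive semidefinite matrix D ∈ ℝ^{N×N}, a parameter α with 0 < α ≤ 1, any T-tuple of plans (u_0, …, u_{T-1}) in ℝ^M, and ū = (1/T) ∑_{t=0}^{T-1} u_t, define for a tuple U the CVaR objective c(U) = inf_{λ ∈ ℝ} ( λ + (1/α) ∑_{(ω_1,…,ω_T) ∈ Ω^T} (∏_{t=1}^{T} p_{ω_t}) · max(‖x_0 + ∑_{t=0}^{T-1} A(ω_{t+1}) u_t − d‖²_D − λ, 0) ). Then c((ū, …, ū)) ≤ c((u_0, …, u_{T-1})). -/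

import Mathlib

/-!
For a fixed threshold `λ` the shortfall `v ↦ max (‖x₀ + v - d‖²_D - λ) 0` is convex, because a
positive semidefinite quadratic form is. The mean-plan dose `∑ₜ A(ωₜ) ū` is the uniform average,
over the `T` cyclic shifts `j`, of the doses `∑ₜ A(ω_{t+j}) uₜ`, so by Jensen its shortfall is at
most the average of the shifted shortfalls. The product weights `∏ₜ p(ωₜ)` are invariant under
cyclic shifts of the scenario tuple, so after taking expectations every shifted term equals the
expected shortfall of the time-varying plan. Comparing the Rockafellar–Uryasev objectives for each
`λ` gives the claim; the infimum is finite because, for `α ≤ 1`, it is bounded below by the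
expected loss.
-/

open Matrix Finset

section QuadraticForm

variable {n : Type*} [Fintype n]

theorem Matrix.dotProduct_mulVec_smul_add_smul {R : Type*} [CommRing R] (D : Matrix n n R)
    {a b : R} (hab : a + b = 1) (x y : n → R) :
    (a • x + b • y) ⬝ᵥ D *ᵥ (a • x + b • y)
      = a * (x ⬝ᵥ D *ᵥ x) + b * (y ⬝ᵥ D *ᵥ y) - a * b * ((x - y) ⬝ᵥ D *ᵥ (x - y)) := by
  obtain rfl : b = 1 - a := eq_sub_of_add_eq' hab
  simp only [mulVec_add, mulVec_sub, mulVec_smul, dotProduct_add, add_dotProduct,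
    dotProduct_sub, sub_dotProduct, smul_dotProduct, dotProduct_smul, smul_eq_mul]
  ring

theorem Matrix.convexOn_dotProduct_mulVec {D : Matrix n n ℝ} (hD : ∀ v, 0 ≤ v ⬝ᵥ D *ᵥ v) :
    ConvexOn ℝ Set.univ fun v : n → ℝ => v ⬝ᵥ D *ᵥ v := by
  refine ⟨convex_univ, fun x _ y _ a b ha hb hab => ?_⟩
  simp only [smul_eq_mul, D.dotProduct_mulVec_smul_add_smul hab]
  linarith [mul_nonneg (mul_nonneg ha hb) (hD (x - y))]

end QuadraticForm

theorem Fin.sum_sum_eq_sum_sum_add {M : Type*} [AddCommMonoid M] {T : ℕ} [NeZero T]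
    (f : Fin T → Fin T → M) : ∑ t, ∑ k, f t k = ∑ j, ∑ k, f (k + j) k := by
  rw [Finset.sum_comm, Finset.sum_comm (f := fun j k => f (k + j) k)]
  exact Fintype.sum_congr _ _ fun k => (Fintype.sum_equiv (Equiv.addLeft k) _ _ fun j => rfl).symm

theorem Fintype.sum_prod_mul_comp_equiv {ι Ω R : Type*} [Fintype ι] [DecidableEq ι] [Fintype Ω]
    [CommSemiring R] (p : Ω → R) (σ : ι ≃ ι) (F : (ι → Ω) → R) :
    ∑ ω : ι → Ω, (∏ t, p (ω t)) * F (ω ∘ σ) = ∑ ω : ι → Ω, (∏ t, p (ω t)) * F ω := by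
  refine Fintype.sum_equiv (Equiv.arrowCongr σ.symm (Equiv.refl Ω)) _ _ fun ω => ?_
  rw [← Equiv.prod_comp σ (fun t => p (ω t))]
  rfl

section MeanPlan

variable {Ω E F : Type*} [AddCommGroup E] [Module ℝ E] [AddCommGroup F] [Module ℝ F]
  {T : ℕ} [NeZero T]

theorem sum_apply_mean_eq_average_shift (B : Ω → F →ₗ[ℝ] E) (ω : Fin T → Ω) (u : Fin T → F) :
    ∑ t, B (ω t) ((T : ℝ)⁻¹ • ∑ k, u k) = ∑ j, (T : ℝ)⁻¹ • ∑ t, B (ω (t + j)) (u t) := by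
  simp only [map_smul, map_sum, ← Finset.smul_sum]
  rw [Fin.sum_sum_eq_sum_sum_add fun t k => B (ω t) (u k)]

theorem ConvexOn.map_sum_apply_mean_le {f : E → ℝ} (hf : ConvexOn ℝ Set.univ f)
    (B : Ω → F →ₗ[ℝ] E) (ω : Fin T → Ω) (u : Fin T → F) :
    f (∑ t, B (ω t) ((T : ℝ)⁻¹ • ∑ k, u k))
      ≤ ∑ j, (T : ℝ)⁻¹ * f (∑ t, B (ω (t + j)) (u t)) := by
  rw [sum_apply_mean_eq_average_shift]
  refine hf.map_sum_le (fun _ _ => by positivity) ?_ fun _ _ => Set.mem_univ _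
  simp [NeZero.ne]

theorem sum_prod_mul_map_sum_apply_mean_le [Fintype Ω] {p : Ω → ℝ} (hp : ∀ ω, 0 ≤ p ω)
    {f : E → ℝ} (hf : ConvexOn ℝ Set.univ f) (B : Ω → F →ₗ[ℝ] E) (u : Fin T → F) :
    ∑ ω : Fin T → Ω, (∏ t, p (ω t)) * f (∑ t, B (ω t) ((T : ℝ)⁻¹ • ∑ k, u k))
      ≤ ∑ ω : Fin T → Ω, (∏ t, p (ω t)) * f (∑ t, B (ω t) (u t)) := by
  set V : (Fin T → Ω) → ℝ := fun ω => f (∑ t, B (ω t) (u t))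
  calc ∑ ω : Fin T → Ω, (∏ t, p (ω t)) * f (∑ t, B (ω t) ((T : ℝ)⁻¹ • ∑ k, u k))
      ≤ ∑ ω : Fin T → Ω, (∏ t, p (ω t)) * ∑ j, (T : ℝ)⁻¹ * V (ω ∘ Equiv.addRight j) :=
        sum_le_sum fun ω _ => mul_le_mul_of_nonneg_left (hf.map_sum_apply_mean_le B ω u)
          (prod_nonneg fun t _ => hp (ω t))
    _ = ∑ j : Fin T, (T : ℝ)⁻¹ * ∑ ω : Fin T → Ω, (∏ t, p (ω t)) * V (ω ∘ Equiv.addRight j) := by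
        simp only [mul_sum]
        rw [sum_comm]
        exact sum_congr rfl fun _ _ => sum_congr rfl fun _ _ => mul_left_comm _ _ _
    _ = ∑ ω : Fin T → Ω, (∏ t, p (ω t)) * V ω := by
        simp only [Fintype.sum_prod_mul_comp_equiv]
        simp [NeZero.ne]

end MeanPlan

section CVaR

variable {ι : Type*} [Fintype ι] {α : ℝ} {w X Y : ι → ℝ}

noncomputable def cvar (α : ℝ) (w X : ι → ℝ) : ℝ :=
  ⨅ l : ℝ, l + α⁻¹ * ∑ i, w i * max (X i - l) 0

theorem sum_mul_le_add_inv_mul_sum_max_sub (hα0 : 0 < α) (hα1 : α ≤ 1) (hw0 : ∀ i, 0 ≤ w i)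
    (hw1 : ∑ i, w i = 1) (X : ι → ℝ) (l : ℝ) :
    ∑ i, w i * X i ≤ l + α⁻¹ * ∑ i, w i * max (X i - l) 0 := by
  have hS : 0 ≤ ∑ i, w i * max (X i - l) 0 :=
    sum_nonneg fun i _ => mul_nonneg (hw0 i) (le_max_right _ _)
  calc ∑ i, w i * X i = l + ∑ i, w i * (X i - l) := by
        simp only [mul_sub, sum_sub_distrib, ← sum_mul, hw1]; ring
    _ ≤ l + ∑ i, w i * max (X i - l) 0 := by
        gcongr with i
        · exact hw0 i
        · exact le_max_left _ _
    _ ≤ l + α⁻¹ * ∑ i, w i * max (X i - l) 0 := by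
        gcongr
        exact le_mul_of_one_le_left hS (one_le_inv₀ hα0 |>.mpr hα1)

theorem cvar_mono (hα0 : 0 < α) (hα1 : α ≤ 1) (hw0 : ∀ i, 0 ≤ w i) (hw1 : ∑ i, w i = 1)
    (h : ∀ l, ∑ i, w i * max (X i - l) 0 ≤ ∑ i, w i * max (Y i - l) 0) :
    cvar α w X ≤ cvar α w Y := by
  refine ciInf_mono ⟨∑ i, w i * X i, ?_⟩ fun l => ?_
  · rintro _ ⟨l, rfl⟩
    exact sum_mul_le_add_inv_mul_sum_max_sub hα0 hα1 hw0 hw1 X l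
  · gcongr l + α⁻¹ * ?_
    exact h l

end CVaR

theorem stmt_8_general {N M T : ℕ} (hT : 0 < T) {Ω : Type*} [Fintype Ω]
    (p : Ω → ℝ) (hp0 : ∀ ω, 0 ≤ p ω) (hp1 : ∑ ω, p ω = 1)
    (A : Ω → Matrix (Fin N) (Fin M) ℝ)
    (x0 d : Fin N → ℝ)
    (D : Matrix (Fin N) (Fin N) ℝ)
    (hpsd : ∀ v : Fin N → ℝ, 0 ≤ v ⬝ᵥ D.mulVec v)
    (α : ℝ) (hα0 : 0 < α) (hα1 : α ≤ 1)
    (u : Fin T → (Fin M → ℝ)) :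
    (⨅ l : ℝ, l + α⁻¹ * ∑ ω : Fin T → Ω, (∏ t, p (ω t)) *
      max (((x0 + ∑ t, (A (ω t)).mulVec ((T : ℝ)⁻¹ • ∑ k, u k) - d) ⬝ᵥ
        D.mulVec (x0 + ∑ t, (A (ω t)).mulVec ((T : ℝ)⁻¹ • ∑ k, u k) - d)) - l) 0)
    ≤ ⨅ l : ℝ, l + α⁻¹ * ∑ ω : Fin T → Ω, (∏ t, p (ω t)) *
      max (((x0 + ∑ t, (A (ω t)).mulVec (u t) - d) ⬝ᵥ
        D.mulVec (x0 + ∑ t, (A (ω t)).mulVec (u t) - d)) - l) 0 := by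
  have : NeZero T := ⟨hT.ne'⟩
  have hw1 : ∑ ω : Fin T → Ω, ∏ t, p (ω t) = 1 := by rw [← Fintype.sum_pow, hp1, one_pow]
  refine cvar_mono hα0 hα1 (fun ω => prod_nonneg fun t _ => hp0 (ω t)) hw1 fun l => ?_
  have hf : ConvexOn ℝ Set.univ
      fun v => max ((x0 + v - d) ⬝ᵥ D *ᵥ (x0 + v - d) - l) 0 := by
    refine ((((convexOn_dotProduct_mulVec hpsd).translate_right (x0 - d)).add_const (-l)).sup
      (convexOn_const 0 convex_univ)).congr fun v _ => ?_
    simp only [Pi.sup_apply, Pi.add_apply, Function.comp_apply, add_sub_right_comm x0 v d,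
      add_comm (x0 - d) v, sub_eq_add_neg _ l]
  exact sum_prod_mul_map_sum_apply_mean_le hp0 hf (fun ω => (A ω).mulVecLin) u

/-- Delivering the mean plan at every fraction is at least as good as any time-varying
plan for the CVaR robust model (Rockafellar–Uryasev functional at level `α`). -/
theorem stmt_8 {N M T : ℕ} (hT : 0 < T) {Ω : Type*} [Fintype Ω] [Nonempty Ω]
    (p : Ω → ℝ) (hp0 : ∀ ω, 0 ≤ p ω) (hp1 : ∑ ω, p ω = 1)
    (A : Ω → Matrix (Fin N) (Fin M) ℝ)
    (x0 d : Fin N → ℝ)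
    (D : Matrix (Fin N) (Fin N) ℝ) (hD : D.IsSymm)
    (hpsd : ∀ v : Fin N → ℝ, 0 ≤ v ⬝ᵥ D.mulVec v)
    (α : ℝ) (hα0 : 0 < α) (hα1 : α ≤ 1)
    (u : Fin T → (Fin M → ℝ)) :
    (⨅ l : ℝ, l + α⁻¹ * ∑ ω : Fin T → Ω, (∏ t, p (ω t)) *
      max (((x0 + ∑ t, (A (ω t)).mulVec ((T : ℝ)⁻¹ • ∑ k, u k) - d) ⬝ᵥ
        D.mulVec (x0 + ∑ t, (A (ω t)).mulVec ((T : ℝ)⁻¹ • ∑ k, u k) - d)) - l) 0)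
    ≤ ⨅ l : ℝ, l + α⁻¹ * ∑ ω : Fin T → Ω, (∏ t, p (ω t)) *
      max (((x0 + ∑ t, (A (ω t)).mulVec (u t) - d) ⬝ᵥ
        D.mulVec (x0 + ∑ t, (A (ω t)).mulVec (u t) - d)) - l) 0 :=
  stmt_8_general hT p hp0 hp1 A x0 d D hpsd α hα0 hα1 u
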